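/- arXiv:2103.00827 — 2 statements merged into one kernel-verified Lean document; each statement's English description precedes it below -/
import Mathlib

section
/- The period set of a linear recurrence equals the set of orders of all (nonzero, with nonzero constant term) divisors of its characteristic polynomial: P(f) = { ord(g) : g divides f }, where the period set is the set of least periods of all sequences generated by the recurrence over all initial states. -/
/-!
A sequence `a` satisfies the recurrence iff `f(x) · ∑ aₙ xⁿ` is a polynomial of degree `< r`, i.e.
iff its generating function is `h / f` with `deg h < deg f`. Reduce this fraction to lowest terms
`h' / g`, so that `g ∣ f` and `g(0) ≠ 0`. Then `a` is periodic with period `p` iff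
`(1 - xᵖ) · h' / g` is a polynomial of degree `< p`, which by coprimality happens iff `g ∣ 1 - xᵖ`;
so the least period of `a` is `ord g`. Since `c_r ≠ 0` the recurrence can be run backwards, so
eventual periodicity is the same as periodicity. Conversely every divisor `g` of `f` with
`g(0) ≠ 0` arises this way, from the coefficients of `(1 mod g) / g`.
-/

open Polynomial

/-- The order of a polynomial `g` (with `g(0) ≠ 0`): the least `j ≥ 1` with `g ∣ x^j - 1`. -/
noncomputable def polyOrd {F : Type*} [Field F] (g : Polynomial F) : ℕ :=
  sInf {j : ℕ | 1 ≤ j ∧ g ∣ X ^ j - 1}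

open scoped PowerSeries

theorem PowerSeries.exists_coe_eq_of_degree_lt_iff {R : Type*} [Semiring R] (A : R⟦X⟧) (N : ℕ) :
    (∃ q : R[X], q.degree < N ∧ (q : R⟦X⟧) = A) ↔
      ∀ m, N ≤ m → PowerSeries.coeff m A = 0 := by
  constructor
  · rintro ⟨q, hq, rfl⟩ m hm
    rw [Polynomial.coeff_coe]
    exact coeff_eq_zero_of_degree_lt (hq.trans_le (by exact_mod_cast hm))
  · intro h
    refine ⟨PowerSeries.trunc N A, PowerSeries.degree_trunc_lt A N, ?_⟩
    ext m
    rw [Polynomial.coeff_coe, PowerSeries.coeff_trunc]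
    split_ifs with hm
    · rfl
    · exact (h m (not_lt.mp hm)).symm

theorem Function.periodic_iff_exists_coe_eq {R : Type*} [Ring R] (a : ℕ → R) (p : ℕ) :
    Function.Periodic a p ↔
      ∃ q : R[X], q.degree < p ∧ (q : R⟦X⟧) = (1 - PowerSeries.X ^ p) * PowerSeries.mk a := by
  have hcoeff (n : ℕ) : PowerSeries.coeff (n + p) ((1 - PowerSeries.X ^ p) * PowerSeries.mk a) =
      a (n + p) - a n := by
    simp [sub_mul, PowerSeries.coeff_X_pow_mul]
  rw [PowerSeries.exists_coe_eq_of_degree_lt_iff]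
  refine ⟨fun ha m hm => ?_, fun h n => sub_eq_zero.mp ((hcoeff n).symm.trans (h _ le_add_self))⟩
  obtain ⟨n, rfl⟩ := Nat.exists_eq_add_of_le' hm
  rw [hcoeff, ha, sub_self]

theorem Polynomial.degree_mul_lt_degree_mul_left {R : Type*} [Semiring R] [NoZeroDivisors R]
    {s g h : R[X]} (hs : s ≠ 0) (hgh : h.degree < g.degree) : (s * h).degree < (s * g).degree := by
  rw [degree_mul, degree_mul]
  exact (WithBot.add_lt_add_iff_left (degree_ne_bot.mpr hs)).mpr hgh

section Recurrence

variable {R : Type*} [CommRing R]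

-- The paper's `f`, with `c i` standing for its `c_{i+1}`.
noncomputable def recurrencePoly (r : ℕ) (c : ℕ → R) : R[X] :=
  1 - ∑ i ∈ Finset.range r, C (c i) * X ^ (i + 1)

def SatisfiesRecurrence (r : ℕ) (c a : ℕ → R) : Prop :=
  ∀ n, a (n + r) = ∑ i ∈ Finset.range r, c i * a (n + r - 1 - i)

theorem coeff_zero_recurrencePoly (r : ℕ) (c : ℕ → R) : (recurrencePoly r c).coeff 0 = 1 := by
  simp [recurrencePoly, finsetSum_coeff, coeff_X_pow]

theorem recurrencePoly_ne_zero [Nontrivial R] (r : ℕ) (c : ℕ → R) : recurrencePoly r c ≠ 0 :=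
  fun hf => by simpa [hf] using coeff_zero_recurrencePoly r c

theorem coeff_recurrencePoly_add_one (r : ℕ) (c : ℕ → R) (m : ℕ) :
    (recurrencePoly r c).coeff (m + 1) = if m < r then -c m else 0 := by
  simp only [recurrencePoly, coeff_sub, coeff_one, finsetSum_coeff, coeff_C_mul, coeff_X_pow]
  split_ifs <;> simp_all

theorem degree_recurrencePoly {r : ℕ} (hr : 0 < r) {c : ℕ → R} (hc : c (r - 1) ≠ 0) :
    (recurrencePoly r c).degree = r := by
  obtain ⟨m, rfl⟩ := Nat.exists_eq_add_one_of_ne_zero hr.ne'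
  refine degree_eq_of_le_of_coeff_ne_zero ?_ ?_
  · refine (degree_le_iff_coeff_zero _ _).mpr fun k hk => ?_
    have hk : m + 1 < k := by exact_mod_cast hk
    obtain ⟨k, rfl⟩ := Nat.exists_eq_add_one_of_ne_zero (n := k) (by omega)
    rw [coeff_recurrencePoly_add_one, if_neg (by omega)]
  · simpa [coeff_recurrencePoly_add_one] using hc

theorem coeff_recurrencePoly_mul_mk (r : ℕ) (c a : ℕ → R) (n : ℕ) :
    PowerSeries.coeff (n + r) ((recurrencePoly r c : R⟦X⟧) * PowerSeries.mk a) =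
      a (n + r) - ∑ i ∈ Finset.range r, c i * a (n + r - 1 - i) := by
  rw [recurrencePoly, ← coeToPowerSeries.ringHom_apply]
  simp only [map_sub, map_one, map_sum, map_mul, map_pow, coeToPowerSeries.ringHom_apply, coe_C,
    coe_X]
  rw [sub_mul, one_mul, map_sub, PowerSeries.coeff_mk, Finset.sum_mul, map_sum]
  congr 1
  refine Finset.sum_congr rfl fun i hi => ?_
  obtain ⟨k, hk⟩ : ∃ k, n + r = k + (i + 1) := ⟨n + r - 1 - i, by grind⟩
  rw [mul_assoc, PowerSeries.coeff_C_mul, hk, PowerSeries.coeff_X_pow_mul, PowerSeries.coeff_mk]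
  grind

theorem satisfiesRecurrence_iff {r : ℕ} {c a : ℕ → R} :
    SatisfiesRecurrence r c a ↔
      ∃ h : R[X], h.degree < r ∧ (h : R⟦X⟧) = (recurrencePoly r c : R⟦X⟧) * PowerSeries.mk a := by
  rw [PowerSeries.exists_coe_eq_of_degree_lt_iff]
  refine ⟨fun ha m hm => ?_, fun h n => ?_⟩
  · obtain ⟨n, rfl⟩ := Nat.exists_eq_add_of_le' hm
    rw [coeff_recurrencePoly_mul_mk, ha n, sub_self]
  · exact sub_eq_zero.mp ((coeff_recurrencePoly_mul_mk r c a n).symm.trans (h _ le_add_self))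

variable {r : ℕ} {c a b : ℕ → R}

theorem SatisfiesRecurrence.sub (ha : SatisfiesRecurrence r c a) (hb : SatisfiesRecurrence r c b) :
    SatisfiesRecurrence r c (a - b) := fun n => by
  simp only [Pi.sub_apply, ha n, hb n, mul_sub, Finset.sum_sub_distrib]

theorem SatisfiesRecurrence.comp_add_right (ha : SatisfiesRecurrence r c a) (p : ℕ) :
    SatisfiesRecurrence r c (fun n => a (n + p)) := fun n => by
  dsimp only
  rw [show n + r + p = n + p + r by omega, ha (n + p)]
  refine Finset.sum_congr rfl fun i hi => ?_
  rw [Finset.mem_range] at hi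
  rw [show n + p + r - 1 - i = n + r - 1 - i + p by omega]

theorem SatisfiesRecurrence.eq_zero_of_eventually_eq_zero [NoZeroDivisors R] (hr : 0 < r)
    (hc : c (r - 1) ≠ 0) (ha : SatisfiesRecurrence r c a) {l : ℕ} (hl : ∀ n ≥ l, a n = 0) :
    a = 0 := by
  induction l with
  | zero => exact funext fun n => hl n n.zero_le
  | succ k ih =>
    refine ih fun n hn => ?_
    rcases hn.lt_or_eq with hn | rfl
    · exact hl n hn
    have hsum : ∑ i ∈ Finset.range r, c i * a (k + r - 1 - i) = c (r - 1) * a k := by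
      rw [Finset.sum_eq_single (r - 1), show k + r - 1 - (r - 1) = k by omega]
      · intro i hi hne
        rw [Finset.mem_range] at hi
        rw [hl _ (by omega), mul_zero]
      · simp [hr]
    have := ha k
    rw [hl _ (by omega), hsum] at this
    exact (mul_eq_zero.mp this.symm).resolve_left hc

theorem SatisfiesRecurrence.periodic_of_eventually_periodic [NoZeroDivisors R] (hr : 0 < r)
    (hc : c (r - 1) ≠ 0) (ha : SatisfiesRecurrence r c a) {p l : ℕ}
    (hl : ∀ n ≥ l, a (n + p) = a n) : Function.Periodic a p := by
  have := ((ha.comp_add_right p).sub ha).eq_zero_of_eventually_eq_zero hr hc (l := l)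
    fun n hn => sub_eq_zero.mpr (hl n hn)
  exact fun n => sub_eq_zero.mp (congrFun this n)

end Recurrence

section Field

variable {F : Type*} [Field F] {r : ℕ} {c a : ℕ → F}

theorem Function.periodic_iff_dvd_X_pow_sub_one {a : ℕ → F} {g h : F[X]}
    (hga : (g : F⟦X⟧) * PowerSeries.mk a = h) (hcop : IsCoprime g h) (hdeg : h.degree < g.degree)
    (p : ℕ) : Function.Periodic a p ↔ g ∣ X ^ p - 1 := by
  rw [Function.periodic_iff_exists_coe_eq, dvd_sub_comm]
  constructor
  · rintro ⟨q, -, hq⟩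
    refine hcop.dvd_of_dvd_mul_right ⟨q, Polynomial.coe_inj.mp ?_⟩
    push_cast
    rw [hq, ← hga]
    ring
  · rintro ⟨s, hs⟩
    refine ⟨s * h, ?_, ?_⟩
    · by_cases hs0 : s = 0
      · simp [hs0]
      calc (s * h).degree < (s * g).degree := degree_mul_lt_degree_mul_left hs0 hdeg
        _ = (1 - X ^ p : F[X]).degree := by rw [mul_comm, hs]
        _ ≤ p := by compute_degree; exact le_rfl
    · have hcoe : ((1 - X ^ p : F[X]) : F⟦X⟧) = 1 - PowerSeries.X ^ p := by push_cast; rfl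
      rw [← hcoe, hs]
      push_cast
      rw [← hga]
      ring

theorem exists_coprime_coe_mul_eq {A : F⟦X⟧} {f h : F[X]} (hf : f ≠ 0)
    (hfA : (f : F⟦X⟧) * A = h) (hdeg : h.degree < f.degree) :
    ∃ g h' : F[X], g ∣ f ∧ IsCoprime g h' ∧ h'.degree < g.degree ∧ (g : F⟦X⟧) * A = h' := by
  classical
  set d := gcd h f
  have hd : d ≠ 0 := gcd_ne_zero_of_right hf
  have hdg : d * (f / d) = f := EuclideanDomain.mul_div_cancel' hd (gcd_dvd_right h f)
  have hdh : d * (h / d) = h := EuclideanDomain.mul_div_cancel' hd (gcd_dvd_left h f)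
  refine ⟨f / d, h / d, Dvd.intro_left d hdg, (isCoprime_div_gcd_div_gcd hf).symm, ?_, ?_⟩
  · rw [← hdg, ← hdh, degree_mul, degree_mul] at hdeg
    exact (WithBot.add_lt_add_iff_left (degree_ne_bot.mpr hd)).mp hdeg
  · refine mul_left_cancel₀ (Polynomial.coe_eq_zero_iff.not.mpr hd) ?_
    rw [← mul_assoc, ← Polynomial.coe_mul, ← Polynomial.coe_mul, hdg, hdh, hfA]

noncomputable def eventualPeriod (a : ℕ → F) : ℕ :=
  sInf {p : ℕ | 1 ≤ p ∧ ∃ l : ℕ, ∀ n ≥ l, a (n + p) = a n}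

theorem SatisfiesRecurrence.eventualPeriod_eq_polyOrd (hr : 0 < r) (hc : c (r - 1) ≠ 0)
    (ha : SatisfiesRecurrence r c a) {g h : F[X]} (hga : (g : F⟦X⟧) * PowerSeries.mk a = h)
    (hcop : IsCoprime g h) (hdeg : h.degree < g.degree) : eventualPeriod a = polyOrd g := by
  refine congrArg sInf (Set.ext fun p => and_congr_right fun _ => ?_)
  rw [← Function.periodic_iff_dvd_X_pow_sub_one hga hcop hdeg]
  exact ⟨fun ⟨_, hl⟩ => ha.periodic_of_eventually_periodic hr hc hl, fun h => ⟨0, fun n _ => h n⟩⟩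

theorem SatisfiesRecurrence.exists_dvd_eventualPeriod_eq (hr : 0 < r) (hc : c (r - 1) ≠ 0)
    (ha : SatisfiesRecurrence r c a) :
    ∃ g : F[X], g ∣ recurrencePoly r c ∧ g ≠ 0 ∧ g.coeff 0 ≠ 0 ∧ eventualPeriod a = polyOrd g := by
  obtain ⟨h, hdeg, hfa⟩ := satisfiesRecurrence_iff.mp ha
  rw [← degree_recurrencePoly hr hc] at hdeg
  obtain ⟨g, h', ⟨w, hgw⟩, hcop, hdeg', hga⟩ :=
    exists_coprime_coe_mul_eq (recurrencePoly_ne_zero r c) hfa.symm hdeg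
  refine ⟨g, ⟨w, hgw⟩, ?_, ?_, ha.eventualPeriod_eq_polyOrd hr hc hga hcop hdeg'⟩
  · rintro rfl
    simp at hdeg'
  · intro hg0
    simpa [hg0] using (congrArg (coeff · 0) hgw).symm.trans (coeff_zero_recurrencePoly r c)

theorem exists_satisfiesRecurrence_eventualPeriod_eq (hr : 0 < r) (hc : c (r - 1) ≠ 0)
    {g : F[X]} (hgf : g ∣ recurrencePoly r c) (hg0 : g.coeff 0 ≠ 0) :
    ∃ a : ℕ → F, SatisfiesRecurrence r c a ∧ eventualPeriod a = polyOrd g := by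
  have hg : g ≠ 0 := by
    rintro rfl
    exact hg0 rfl
  -- `1 % g` is `1`, or `0` when `g` is a unit; either way it is coprime to `g` and of lower degree
  have hcop : IsCoprime g (1 % g) :=
    ⟨1 / g, 1, by rw [mul_comm, one_mul, EuclideanDomain.div_add_mod]⟩
  have hdeg : (1 % g).degree < g.degree := degree_mod_lt 1 hg
  set a : ℕ → F := fun n => PowerSeries.coeff n ((1 % g : F[X]) * (g : F⟦X⟧)⁻¹)
  have hga : (g : F⟦X⟧) * PowerSeries.mk a = (1 % g : F[X]) := by
    rw [show PowerSeries.mk a = _ from PowerSeries.ext fun n => PowerSeries.coeff_mk _ _,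
      mul_left_comm, PowerSeries.mul_inv_cancel _ (by rwa [constantCoeff_coe]), mul_one]
  obtain ⟨w, hw⟩ := hgf
  have hw0 : w ≠ 0 := right_ne_zero_of_mul (hw ▸ recurrencePoly_ne_zero r c)
  have ha : SatisfiesRecurrence r c a := by
    refine satisfiesRecurrence_iff.mpr ⟨w * (1 % g), ?_, ?_⟩
    · calc (w * (1 % g)).degree < (w * g).degree := degree_mul_lt_degree_mul_left hw0 hdeg
        _ = r := by rw [mul_comm, ← hw, degree_recurrencePoly hr hc]
    · rw [hw, coe_mul, coe_mul, mul_comm (g : F⟦X⟧), mul_assoc, hga]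
  exact ⟨a, ha, ha.eventualPeriod_eq_polyOrd hr hc hga hcop hdeg⟩

end Field

theorem stmt_5_general {F : Type*} [Field F] (r : ℕ) (hr : 0 < r) (c : ℕ → F)
    (hc : c (r - 1) ≠ 0) :
    {p : ℕ | ∃ a : ℕ → F,
        (∀ n : ℕ, a (n + r) = ∑ i ∈ Finset.range r, c i * a (n + r - 1 - i)) ∧
        p = sInf {p' : ℕ | 1 ≤ p' ∧ ∃ l : ℕ, ∀ n ≥ l, a (n + p') = a n}} =
      {t : ℕ | ∃ g : Polynomial F,
        g ∣ (1 - ∑ i ∈ Finset.range r, C (c i) * X ^ (i + 1)) ∧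
        g ≠ 0 ∧ g.coeff 0 ≠ 0 ∧ t = polyOrd g} := by
  ext t
  constructor
  · rintro ⟨a, ha, rfl⟩
    exact SatisfiesRecurrence.exists_dvd_eventualPeriod_eq hr hc ha
  · rintro ⟨g, hgf, -, hg0, rfl⟩
    obtain ⟨a, ha, hpa⟩ := exists_satisfiesRecurrence_eventualPeriod_eq hr hc hgf hg0
    exact ⟨a, ha, hpa.symm⟩

/-- The period set of a linear recurrence equals the set of orders of all nonzero divisors
with nonzero constant term of its characteristic polynomial `f(x) = 1 - ∑_{i=1}^r c_i x^i`.

The period of a generated sequence is the least `p ≥ 1` such that `a_{n+p} = a_n` for all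
sufficiently large `n`.  Indexing convention: `a 0, …, a (r-1)` encode the initial state and
`c i` denotes the paper's `c_{i+1}`. -/
theorem stmt_5 {F : Type*} [Field F] [Fintype F] (r : ℕ) (hr : 0 < r) (c : ℕ → F)
    (hc : c (r - 1) ≠ 0) :
    {p : ℕ | ∃ a : ℕ → F,
        (∀ n : ℕ, a (n + r) = ∑ i ∈ Finset.range r, c i * a (n + r - 1 - i)) ∧
        p = sInf {p' : ℕ | 1 ≤ p' ∧ ∃ l : ℕ, ∀ n ≥ l, a (n + p') = a n}} =
      {t : ℕ | ∃ g : Polynomial F,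
        g ∣ (1 - ∑ i ∈ Finset.range r, C (c i) * X ^ (i + 1)) ∧
        g ≠ 0 ∧ g.coeff 0 ≠ 0 ∧ t = polyOrd g} :=
  stmt_5_general r hr c hc
end

section
/- If g is an irreducible polynomial over GF(q) (q a power of the prime p) with g(0) ≠ 0 and order a, then for any integer b ≥ 1 the order of g^b equals a·p^t, where t is the smallest nonnegative integer with p^t ≥ b. -/
/-!
The order of `h` is the multiplicative order of the root `X` of `F[X]/(h)`, so `h ∣ X^n - 1` iff
`polyOrd h ∣ n`. For irreducible `g` of order `a`, Frobenius gives `X^(p k) - 1 = (X^k - 1)^p`, so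
`p ∤ a`; hence `X^a - 1` is separable, `g` divides it exactly once, and `g^b` divides
`X^(a p^s) - 1 = (X^a - 1)^(p^s)` exactly when `b ≤ p^s`. The order of `g^b` is a multiple of `a`
dividing `a p^t`, hence of the form `a p^s` with `s ≤ t`, and minimality of `t` forces `s = t`.
-/

open Polynomial

theorem root_pow_eq_one_iff_dvd {R : Type*} [CommRing R] {h : R[X]} {n : ℕ} :
    AdjoinRoot.root h ^ n = 1 ↔ h ∣ X ^ n - 1 := by
  rw [← sub_eq_zero, ← AdjoinRoot.mk_X, ← map_pow, ← map_one (AdjoinRoot.mk h), ← map_sub,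
    AdjoinRoot.mk_eq_zero]

theorem pow_dvd_pow_iff_le_of_squarefree {R : Type*} [CommMonoidWithZero R]
    [IsCancelMulZero R] {g f : R} (hg : Prime g) (hf : Squarefree f) (hgf : g ∣ f) {b n : ℕ} :
    g ^ b ∣ f ^ n ↔ b ≤ n := by
  refine ⟨fun h => ?_, fun h => (pow_dvd_pow g h).trans (pow_dvd_pow_of_dvd hgf n)⟩
  obtain ⟨m, rfl⟩ := hgf
  have hgm : ¬ g ∣ m := fun ⟨k, hk⟩ => hg.not_isUnit (hf g ⟨k, by rw [hk, mul_assoc]⟩)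
  rw [mul_pow, mul_comm] at h
  exact (pow_dvd_pow_iff hg.ne_zero hg.not_isUnit).1
    (hg.pow_dvd_of_dvd_mul_left b (fun h' => hgm (hg.dvd_of_dvd_pow h')) h)

section PolyOrd

variable {F : Type*} [Field F]

theorem polyOrd_eq_orderOf_root (h : F[X]) : polyOrd h = orderOf (AdjoinRoot.root h) := by
  rw [polyOrd, orderOf, Function.minimalPeriod_eq_sInf_n_pos_IsPeriodicPt]
  simp only [isPeriodicPt_mul_iff_pow_eq_one, root_pow_eq_one_iff_dvd, Nat.one_le_iff_ne_zero,
    Nat.pos_iff_ne_zero]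

theorem polyOrd_dvd_iff {h : F[X]} {n : ℕ} : polyOrd h ∣ n ↔ h ∣ X ^ n - 1 := by
  rw [polyOrd_eq_orderOf_root, orderOf_dvd_iff_pow_eq_one, root_pow_eq_one_iff_dvd]

theorem dvd_X_pow_polyOrd_sub_one (h : F[X]) : h ∣ X ^ polyOrd h - 1 :=
  polyOrd_dvd_iff.1 dvd_rfl

theorem polyOrd_pos_of_irreducible [Finite F] {g : F[X]} (hg : Irreducible g)
    (hg0 : g.eval 0 ≠ 0) : 0 < polyOrd g := by
  have : Fact (Irreducible g) := ⟨hg⟩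
  have : Module.Finite F (AdjoinRoot g) := (AdjoinRoot.powerBasis hg.ne_zero).finite
  have : Finite (AdjoinRoot g) := Module.finite_of_finite F
  have hroot : AdjoinRoot.root g ≠ 0 := by
    intro h0
    have := AdjoinRoot.eval₂_root g
    rw [h0, eval₂_at_zero, map_eq_zero_iff _ (AdjoinRoot.of g).injective,
      coeff_zero_eq_eval_zero] at this
    exact hg0 this
  rw [polyOrd_eq_orderOf_root, ← Units.val_mk0 hroot, orderOf_units]
  exact orderOf_pos _

theorem not_dvd_polyOrd (p : ℕ) [Fact p.Prime] [CharP F p] {g : F[X]} (hg : Prime g)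
    (hpos : 0 < polyOrd g) : ¬ p ∣ polyOrd g := by
  rintro ⟨k, hk⟩
  have hk0 : 0 < k := Nat.pos_of_mul_pos_left (hk ▸ hpos)
  have hgk : g ∣ X ^ k - 1 := by
    refine hg.dvd_of_dvd_pow (n := p) ?_
    rw [sub_pow_char, one_pow, ← pow_mul, mul_comm, ← hk]
    exact dvd_X_pow_polyOrd_sub_one g
  have hle : p * k ≤ k := hk ▸ Nat.le_of_dvd hk0 (polyOrd_dvd_iff.2 hgk)
  have hp2 := (Fact.out : p.Prime).two_le
  nlinarith

theorem pow_dvd_X_pow_polyOrd_mul_sub_one_iff (p : ℕ) [Fact p.Prime] [CharP F p] {g : F[X]}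
    (hg : Irreducible g) (hpos : 0 < polyOrd g) (b s : ℕ) :
    g ^ b ∣ X ^ (polyOrd g * p ^ s) - 1 ↔ b ≤ p ^ s := by
  have hsep : (X ^ polyOrd g - 1 : F[X]).Separable :=
    X_pow_sub_one_separable_iff.2 fun h0 =>
      not_dvd_polyOrd p hg.prime hpos ((CharP.cast_eq_zero_iff F p _).1 h0)
  rw [pow_mul, ← one_pow (p ^ s), ← sub_pow_char_pow]
  exact pow_dvd_pow_iff_le_of_squarefree hg.prime hsep.squarefree (dvd_X_pow_polyOrd_sub_one g)

end PolyOrd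

/-- If `g` is irreducible over `GF(q)` (`q` a power of the prime `p`) with `g(0) ≠ 0` and
order `a`, then for any `b ≥ 1` the order of `g^b` is `a · p^t`, where `t` is the smallest
nonnegative integer with `p^t ≥ b`. -/
theorem stmt_6 {F : Type*} [Field F] [Fintype F] (p : ℕ) [hp : Fact p.Prime] [CharP F p]
    (g : Polynomial F) (hg : Irreducible g) (hg0 : g.eval 0 ≠ 0)
    (A : ℕ) (hA : polyOrd g = A) (b : ℕ) (hb : 1 ≤ b)
    (t : ℕ) (ht : b ≤ p ^ t) (htmin : ∀ t' : ℕ, b ≤ p ^ t' → t ≤ t') :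
    polyOrd (g ^ b) = A * p ^ t := by
  subst hA
  have hpos := polyOrd_pos_of_irreducible hg hg0
  have key := pow_dvd_X_pow_polyOrd_mul_sub_one_iff p hg hpos b
  have hc_dvd : polyOrd (g ^ b) ∣ polyOrd g * p ^ t := polyOrd_dvd_iff.2 ((key t).2 ht)
  obtain ⟨k, hk⟩ : polyOrd g ∣ polyOrd (g ^ b) :=
    polyOrd_dvd_iff.2 ((dvd_pow_self g (by omega)).trans (dvd_X_pow_polyOrd_sub_one _))
  rw [hk, Nat.mul_dvd_mul_iff_left hpos] at hc_dvd
  obtain ⟨s, hs, rfl⟩ := (Nat.dvd_prime_pow hp.out).1 hc_dvd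
  have hts : t ≤ s := htmin s ((key s).1 (hk ▸ dvd_X_pow_polyOrd_sub_one _))
  rw [hk, le_antisymm hs hts]
end
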